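/- Let ω : R^n → R^n satisfy the two-sided Lipschitz (quasi-convexity) condition βμ|x₁ - x₂|₂² ≤ (ω(x₁) - ω(x₂))·(x₁ - x₂) and |ω(x₁) - ω(x₂)|₂ ≤ β|x₁ - x₂|₂, with constants β, μ > 0. Let M ⊆ R^n be an r-dimensional subspace spanned by integer vectors k^{(1)},...,k^{(r)} with |k^{(i)}|₁ ≤ K, and let l ∈ Z^r. Let Z = {x : |k^{(j)}·ω(x) + 2πl_j| ≤ α for all j}. Fix x₀ and let C = {x ∈ Z : dist(x, x₀ + M) ≤ δ}. Then for any x₁, x₂ ∈ C, |x₁ - x₂|₂ ≤ (4/μ)δ + (2rK^{r-1}/(βμ))α. -/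

import Mathlib

/-!
The Gram determinant of linearly independent integer vectors `k⁽ⁱ⁾` is a positive integer,
hence at least `1`. By Cramer's rule and Hadamard's inequality, the coefficients of a vector
`w = ∑ cᵢ k⁽ⁱ⁾` then satisfy `|cᵢ| ≤ K^(r-1) ‖w‖`; pairing `w` with `w` shows that
`‖w‖ ≤ r K^(r-1) a` as soon as every `|⟪k⁽ⁱ⁾, w⟫| ≤ a`. We apply this to the projection
`w = P_M (ω x₁ - ω x₂)`, for which `⟪k⁽ⁱ⁾, w⟫ = ⟪k⁽ⁱ⁾, ω x₁ - ω x₂⟫` is at most `2α` in absolute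
value by resonance. Writing `d = x₁ - x₂`, the remainder `d - P_M d` has norm at most `2δ`, so
`βμ ‖d‖² ≤ ⟪w, d⟫ + ⟪ω x₁ - ω x₂, d - P_M d⟫ ≤ (2 r K^(r-1) α + 2βδ) ‖d‖`.
-/

open scoped RealInnerProductSpace
open Finset Matrix

section GramDeterminant

variable {F : Type*} [NormedAddCommGroup F] [InnerProductSpace ℝ F]

lemma det_gram_eq_det_sq {ι : Type*} [Fintype ι] [DecidableEq ι] (b : OrthonormalBasis ι ℝ F)
    (v : ι → F) : (gram ℝ v).det = b.toBasis.det v ^ 2 := by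
  rw [gram_eq_conjTranspose_mul b, det_mul, det_conjTranspose, Module.Basis.det_apply,
    star_trivial, sq]
  rfl

lemma abs_coeff_mul_abs_det_le {r : ℕ} [Fact (Module.finrank ℝ F = r)]
    (b : OrthonormalBasis (Fin r) ℝ F) (v : Fin r → F) (c : Fin r → ℝ) (i : Fin r) :
    |c i| * |b.toBasis.det v| ≤ ‖∑ j, c j • v j‖ * ∏ j ∈ univ.erase i, ‖v j‖ := by
  have hcramer :
      b.toBasis.det (Function.update v i (∑ j, c j • v j)) = c i * b.toBasis.det v := by
    rw [AlternatingMap.map_update_sum, sum_eq_single i]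
    · rw [AlternatingMap.map_update_smul, Function.update_eq_self, smul_eq_mul]
    · intro j _ hji
      rw [AlternatingMap.map_update_smul, AlternatingMap.map_update_self _ _ hji.symm, smul_zero]
    · simp
  have hhadamard :=
    b.toBasis.orientation.abs_volumeForm_apply_le (Function.update v i (∑ j, c j • v j))
  rwa [b.toBasis.orientation.volumeForm_robust b rfl, hcramer, abs_mul,
    ← mul_prod_erase univ _ (mem_univ i), Function.update_self,
    prod_congr rfl fun j hj => by rw [Function.update_of_ne (ne_of_mem_erase hj)]] at hhadamard

lemma abs_coeff_le_of_one_le_det_gram {r : ℕ} {v : Fin r → F} (hv : LinearIndependent ℝ v)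
    (hgram : 1 ≤ (gram ℝ v).det) {K : ℝ} (hK : ∀ j, ‖v j‖ ≤ K) (c : Fin r → ℝ) (i : Fin r) :
    |c i| ≤ K ^ (r - 1) * ‖∑ j, c j • v j‖ := by
  set M := Submodule.span ℝ (Set.range v)
  let w : Fin r → M := fun j => ⟨v j, Submodule.subset_span (Set.mem_range_self j)⟩
  have : FiniteDimensional ℝ M := FiniteDimensional.span_of_finite ℝ (Set.finite_range v)
  have : Fact (Module.finrank ℝ M = r) := ⟨by simpa using finrank_span_eq_card hv⟩
  let b : OrthonormalBasis (Fin r) ℝ M := (stdOrthonormalBasis ℝ M).reindex (finCongr Fact.out)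
  have hdet : 1 ≤ |b.toBasis.det w| := by
    rw [← one_le_sq_iff_one_le_abs, ← det_gram_eq_det_sq b]
    exact hgram
  have hprod : ∏ j ∈ univ.erase i, ‖v j‖ ≤ K ^ (r - 1) := by
    calc ∏ j ∈ univ.erase i, ‖v j‖ ≤ ∏ _j ∈ univ.erase i, K :=
          prod_le_prod (fun _ _ => norm_nonneg _) fun j _ => hK j
      _ = K ^ (r - 1) := by simp [card_erase_of_mem]
  have hw : ‖∑ j, c j • w j‖ = ‖∑ j, c j • v j‖ := by
    rw [← Submodule.norm_coe]
    simp [w]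
  calc |c i| ≤ |c i| * |b.toBasis.det w| := le_mul_of_one_le_right (abs_nonneg _) hdet
    _ ≤ ‖∑ j, c j • v j‖ * ∏ j ∈ univ.erase i, ‖v j‖ := by
        simpa [hw, w] using abs_coeff_mul_abs_det_le b w c i
    _ ≤ ‖∑ j, c j • v j‖ * K ^ (r - 1) := mul_le_mul_of_nonneg_left hprod (norm_nonneg _)
    _ = K ^ (r - 1) * ‖∑ j, c j • v j‖ := mul_comm _ _

lemma norm_le_of_abs_inner_le_of_one_le_det_gram {r : ℕ} {v : Fin r → F}
    (hv : LinearIndependent ℝ v) (hgram : 1 ≤ (gram ℝ v).det) {K a : ℝ} (hK₀ : 0 ≤ K)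
    (hK : ∀ j, ‖v j‖ ≤ K) (ha : 0 ≤ a) {w : F} (hw : w ∈ Submodule.span ℝ (Set.range v))
    (hinner : ∀ j, |⟪v j, w⟫| ≤ a) :
    ‖w‖ ≤ r * K ^ (r - 1) * a := by
  obtain ⟨c, hc⟩ := (Submodule.mem_span_range_iff_exists_fun ℝ).1 hw
  have hsq : ‖w‖ * ‖w‖ ≤ r * K ^ (r - 1) * a * ‖w‖ := by
    calc ‖w‖ * ‖w‖ = ⟪∑ j, c j • v j, w⟫ := by rw [hc, real_inner_self_eq_norm_mul_norm]
      _ = ∑ j, c j * ⟪v j, w⟫ := by simp only [sum_inner, real_inner_smul_left]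
      _ ≤ ∑ _j : Fin r, K ^ (r - 1) * ‖w‖ * a := by
          refine sum_le_sum fun j _ => (le_abs_self _).trans ?_
          have hcj : |c j| ≤ K ^ (r - 1) * ‖w‖ := by
            simpa [hc] using abs_coeff_le_of_one_le_det_gram hv hgram hK c j
          rw [abs_mul]
          exact mul_le_mul hcj (hinner j) (abs_nonneg _) ((abs_nonneg _).trans hcj)
      _ = r * K ^ (r - 1) * a * ‖w‖ := by
          simp only [sum_const, card_univ, Fintype.card_fin, nsmul_eq_mul]; ring
  rcases (norm_nonneg w).eq_or_lt with h | h
  · rw [← h]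
    positivity
  · exact le_of_mul_le_mul_right hsq h

end GramDeterminant

lemma one_le_det_gram_of_int {ι ι' : Type*} [Fintype ι] [DecidableEq ι] [Fintype ι']
    (k : ι → ι' → ℤ)
    (hk : LinearIndependent ℝ fun i => (WithLp.toLp 2 fun j => (k i j : ℝ) : EuclideanSpace ℝ ι')) :
    1 ≤ (gram ℝ fun i => (WithLp.toLp 2 fun j => (k i j : ℝ) : EuclideanSpace ℝ ι')).det := by
  have hcast : gram ℝ (fun i => (WithLp.toLp 2 fun j => (k i j : ℝ) : EuclideanSpace ℝ ι')) =
      (Int.castRingHom ℝ).mapMatrix (of k * (of k)ᵀ) := by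
    ext a b
    simp [gram_apply, mul_apply, PiLp.inner_apply, mul_comm]
  have hne := det_gram_ne_zero_iff_linearIndependent.2 hk
  have hnonneg := (posSemidef_gram ℝ
    fun i => (WithLp.toLp 2 fun j => (k i j : ℝ) : EuclideanSpace ℝ ι')).det_nonneg
  rw [hcast, ← RingHom.map_det, eq_intCast] at hne hnonneg ⊢
  have : 0 < (of k * (of k)ᵀ).det := by exact_mod_cast lt_of_le_of_ne hnonneg hne.symm
  exact_mod_cast this

lemma norm_le_sum_abs_apply {ι : Type*} [Fintype ι] (x : EuclideanSpace ℝ ι) :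
    ‖x‖ ≤ ∑ i, |x i| := by
  rw [← sq_le_sq₀ (norm_nonneg _) (sum_nonneg fun _ _ => abs_nonneg _),
    EuclideanSpace.real_norm_sq_eq]
  simpa only [sq_abs] using sum_sq_le_sq_sum_of_nonneg fun i _ => abs_nonneg (x i)

section Projection

variable {E : Type*} [NormedAddCommGroup E] [InnerProductSpace ℝ E]
  {M : Submodule ℝ E} [M.HasOrthogonalProjection]

lemma norm_sub_starProjection_sub_le {x₀ x₁ x₂ m₁ m₂ : E} (hm₁ : m₁ ∈ M) (hm₂ : m₂ ∈ M)
    {δ : ℝ} (h₁ : ‖x₁ - (x₀ + m₁)‖ ≤ δ) (h₂ : ‖x₂ - (x₀ + m₂)‖ ≤ δ) :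
    ‖(x₁ - x₂) - M.starProjection (x₁ - x₂)‖ ≤ 2 * δ := by
  rw [Submodule.starProjection_minimal]
  calc ⨅ m : M, ‖(x₁ - x₂) - m‖ ≤ ‖(x₁ - x₂) - (m₁ - m₂)‖ :=
        ciInf_le (f := fun m : M => ‖(x₁ - x₂) - m‖)
          ⟨0, Set.forall_mem_range.2 fun _ => norm_nonneg _⟩ ⟨m₁ - m₂, M.sub_mem hm₁ hm₂⟩
    _ = ‖(x₁ - (x₀ + m₁)) - (x₂ - (x₀ + m₂))‖ := by congr 1; abel
    _ ≤ 2 * δ := by linarith [norm_sub_le (x₁ - (x₀ + m₁)) (x₂ - (x₀ + m₂))]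

lemma mul_norm_le_add_of_inner_le {u d : E} {β μ ε A : ℝ} (hβ : 0 ≤ β)
    (hconv : β * μ * ‖d‖ ^ 2 ≤ ⟪u, d⟫) (hlip : ‖u‖ ≤ β * ‖d‖)
    (hd : ‖d - M.starProjection d‖ ≤ ε) (hu : ‖M.starProjection u‖ ≤ A) :
    β * μ * ‖d‖ ≤ A + β * ε := by
  have hsplit : ⟪u, d⟫ = ⟪M.starProjection u, d⟫ + ⟪u, d - M.starProjection d⟫ := by
    rw [Submodule.inner_starProjection_left_eq_right, ← inner_add_right, add_sub_cancel]
  have hle : β * μ * ‖d‖ * ‖d‖ ≤ (A + β * ε) * ‖d‖ := by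
    calc β * μ * ‖d‖ * ‖d‖ ≤ ⟪M.starProjection u, d⟫ + ⟪u, d - M.starProjection d⟫ := by
          rw [← hsplit]
          nlinarith
      _ ≤ ‖M.starProjection u‖ * ‖d‖ + ‖u‖ * ‖d - M.starProjection d‖ :=
          add_le_add (real_inner_le_norm _ _) (real_inner_le_norm _ _)
      _ ≤ A * ‖d‖ + β * ‖d‖ * ε := by gcongr
      _ = (A + β * ε) * ‖d‖ := by ring
  rcases (norm_nonneg d).eq_or_lt with h | h
  · have hA := (norm_nonneg _).trans hu
    have hε := (norm_nonneg _).trans hd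
    rw [← h, mul_zero]
    positivity
  · exact le_of_mul_le_mul_right hle h

end Projection

theorem stmt_10_general (n r : ℕ)
    (ω : EuclideanSpace ℝ (Fin n) → EuclideanSpace ℝ (Fin n))
    (β μ K α δ : ℝ) (hβ : 0 < β) (hμ : 0 < μ) (hK : 0 < K) (hα : 0 ≤ α) (hδ : 0 ≤ δ)
    (hconv : ∀ x₁ x₂, β * μ * ‖x₁ - x₂‖ ^ 2 ≤ ⟪ω x₁ - ω x₂, x₁ - x₂⟫)
    (hlip : ∀ x₁ x₂, ‖ω x₁ - ω x₂‖ ≤ β * ‖x₁ - x₂‖)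
    (k : Fin r → (Fin n → ℤ))
    (hind : LinearIndependent ℝ (fun i => (WithLp.toLp 2 (fun j => (k i j : ℝ)) : EuclideanSpace ℝ (Fin n))))
    (hk : ∀ i, (∑ j, |(k i j : ℝ)|) ≤ K)
    (M : Submodule ℝ (EuclideanSpace ℝ (Fin n)))
    (hM : M = Submodule.span ℝ
      (Set.range fun i => (WithLp.toLp 2 (fun j => (k i j : ℝ)) : EuclideanSpace ℝ (Fin n))))
    (l : Fin r → ℤ)
    (Z : Set (EuclideanSpace ℝ (Fin n)))
    (hZ : Z = {x | ∀ j, |⟪((WithLp.equiv 2 (Fin n → ℝ)).symm fun j' => (k j j' : ℝ)), ω x⟫ +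
      2 * Real.pi * l j| ≤ α})
    (x₀ : EuclideanSpace ℝ (Fin n))
    (C : Set (EuclideanSpace ℝ (Fin n)))
    (hC : C = {x ∈ Z | ∃ m ∈ M, ‖x - (x₀ + m)‖ ≤ δ}) :
    ∀ x₁ ∈ C, ∀ x₂ ∈ C,
      ‖x₁ - x₂‖ ≤ (4 / μ) * δ + (2 * r * K ^ (r - 1) / (β * μ)) * α := by
  subst hC hZ
  rintro x₁ ⟨hZ₁, m₁, hm₁, hd₁⟩ x₂ ⟨hZ₂, m₂, hm₂, hd₂⟩
  simp only [Set.mem_ofPred_eq, WithLp.equiv_symm_apply] at hZ₁ hZ₂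
  have hres : ∀ j, |⟪(WithLp.toLp 2 fun j' => (k j j' : ℝ) : EuclideanSpace ℝ (Fin n)),
      M.starProjection (ω x₁ - ω x₂)⟫| ≤ 2 * α := by
    intro j
    have hkM : (WithLp.toLp 2 fun j' => (k j j' : ℝ) : EuclideanSpace ℝ (Fin n)) ∈ M :=
      hM ▸ Submodule.subset_span (Set.mem_range_self j)
    rw [← Submodule.inner_starProjection_left_eq_right, M.starProjection_eq_self_iff.2 hkM,
      inner_sub_right]
    have h₁ := abs_le.1 (hZ₁ j)
    have h₂ := abs_le.1 (hZ₂ j)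
    exact abs_le.2 ⟨by linarith, by linarith⟩
  have hproj : ‖M.starProjection (ω x₁ - ω x₂)‖ ≤ r * K ^ (r - 1) * (2 * α) :=
    norm_le_of_abs_inner_le_of_one_le_det_gram hind (one_le_det_gram_of_int k hind) hK.le
      (fun i => (norm_le_sum_abs_apply _).trans (by simpa using hk i)) (by positivity)
      (hM ▸ M.starProjection_apply_mem _) hres
  have hbound := mul_norm_le_add_of_inner_le hβ.le (hconv x₁ x₂) (hlip x₁ x₂)
    (norm_sub_starProjection_sub_le hm₁ hm₂ hd₁ hd₂) hproj
  calc ‖x₁ - x₂‖ ≤ (r * K ^ (r - 1) * (2 * α) + β * (2 * δ)) / (β * μ) :=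
        (le_div_iff₀' (by positivity)).2 hbound
    _ = 2 / μ * δ + (2 * r * K ^ (r - 1) / (β * μ)) * α := by field_simp; ring
    _ ≤ 4 / μ * δ + (2 * r * K ^ (r - 1) / (β * μ)) * α := by gcongr; norm_num

/-- Proposition 3.1(iv): diameter bound for resonant cylinders. If `ω` satisfies the
two-sided quasi-convexity/Lipschitz conditions, `M` is the `r`-dimensional subspace
spanned by integer vectors `k⁽ⁱ⁾` with `|k⁽ⁱ⁾|₁ ≤ K`, and `C` is the part of the
resonant zone `Z` within distance `δ` of the affine plane `x₀ + M`, then any two points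
of `C` are at distance at most `(4/μ)δ + (2rK^{r-1}/(βμ))α`. -/
theorem stmt_10 (n r : ℕ) (hr : 1 ≤ r) (hrn : r ≤ n)
    (ω : EuclideanSpace ℝ (Fin n) → EuclideanSpace ℝ (Fin n))
    (β μ K α δ : ℝ) (hβ : 0 < β) (hμ : 0 < μ) (hK : 0 < K) (hα : 0 ≤ α) (hδ : 0 ≤ δ)
    (hconv : ∀ x₁ x₂, β * μ * ‖x₁ - x₂‖ ^ 2 ≤ ⟪ω x₁ - ω x₂, x₁ - x₂⟫)
    (hlip : ∀ x₁ x₂, ‖ω x₁ - ω x₂‖ ≤ β * ‖x₁ - x₂‖)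
    (k : Fin r → (Fin n → ℤ))
    (hind : LinearIndependent ℝ (fun i => (WithLp.toLp 2 (fun j => (k i j : ℝ)) : EuclideanSpace ℝ (Fin n))))
    (hk : ∀ i, (∑ j, |(k i j : ℝ)|) ≤ K)
    (M : Submodule ℝ (EuclideanSpace ℝ (Fin n)))
    (hM : M = Submodule.span ℝ
      (Set.range fun i => (WithLp.toLp 2 (fun j => (k i j : ℝ)) : EuclideanSpace ℝ (Fin n))))
    (l : Fin r → ℤ)
    (Z : Set (EuclideanSpace ℝ (Fin n)))
    (hZ : Z = {x | ∀ j, |⟪((WithLp.equiv 2 (Fin n → ℝ)).symm fun j' => (k j j' : ℝ)), ω x⟫ +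
      2 * Real.pi * l j| ≤ α})
    (x₀ : EuclideanSpace ℝ (Fin n))
    (C : Set (EuclideanSpace ℝ (Fin n)))
    (hC : C = {x ∈ Z | ∃ m ∈ M, ‖x - (x₀ + m)‖ ≤ δ}) :
    ∀ x₁ ∈ C, ∀ x₂ ∈ C,
      ‖x₁ - x₂‖ ≤ (4 / μ) * δ + (2 * r * K ^ (r - 1) / (β * μ)) * α :=
  stmt_10_general n r ω β μ K α δ hβ hμ hK hα hδ hconv hlip k hind hk M hM l Z hZ x₀ C hC
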